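/- For every real $p$ with $1<p<2$ there exists a constant $C_p>0$ such that for all vectors $a,b\in\mathbb{R}^N$ with $(a,b)\ne(0,0)$, $|a|^p \ge |b|^p + p|b|^{p-2}\, b\cdot(a-b) + C_p\frac{|a-b|^2}{(|a|+|b|)^{2-p}}$. -/

import Mathlib

/-!
Put `s = ‖a‖`, `t = ‖b‖` and `C = (p - 1) / 2`. For fixed `s, t` the right-hand side is affine
in `⟪b, a⟫ ≤ s t` with slope `p t ^ (p - 2) - 2 C (s + t) ^ (p - 2) ≥ 0` (unless `b = 0`, when
`⟪b, a⟫ = s t = 0` anyway), so it suffices to treat `⟪b, a⟫ = s t`, i.e. `a = z • b` with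
`z ≥ 0`. By homogeneity this is the scalar bound
`z ^ p - 1 - p (z - 1) ≥ p (p - 1) / 2 * (z - 1) ^ 2 * (z + 1) ^ (p - 2)`, a second-order Taylor
estimate: by concavity of `w ↦ w ^ (p - 1)`, its secant slope between `1` and any `w` between `1`
and `z` is at least `(p - 1) max w 1 ^ (p - 2) ≥ (p - 1) (z + 1) ^ (p - 2)`.
-/

open Set Real

theorem mul_sq_le_sub_sub_mul_of_hasDerivAt {f f' : ℝ → ℝ} {a z m : ℝ}
    (hf : ∀ x ∈ uIcc a z, HasDerivAt f (f' x) x)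
    (hf' : ∀ x ∈ uIcc a z, m * (x - a) ^ 2 ≤ (f' x - f' a) * (x - a)) :
    m / 2 * (z - a) ^ 2 ≤ f z - f a - f' a * (z - a) := by
  set g : ℝ → ℝ := fun x ↦ f x - f a - f' a * (x - a) - m / 2 * (x - a) ^ 2
  have hg : ∀ x ∈ uIcc a z, HasDerivAt g (f' x - f' a - m * (x - a)) x := fun x hx ↦ by
    have hlin := ((hasDerivAt_id' x).sub_const a).const_mul (f' a)
    have hquad := (((hasDerivAt_id' x).sub_const a).pow 2).const_mul (m / 2)
    exact ((((hf x hx).sub_const (f a)).sub hlin).sub hquad).congr_deriv (by ring)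
  have hg' : ∀ x ∈ uIcc a z, 0 ≤ (f' x - f' a - m * (x - a)) * (x - a) := fun x hx ↦ by
    nlinarith [hf' x hx]
  suffices g a ≤ g z by simpa [g] using this
  rcases le_total a z with haz | hza
  · rw [uIcc_of_le haz] at hg hg'
    refine monotoneOn_of_hasDerivWithinAt_nonneg (convex_Icc a z)
      (fun x hx ↦ (hg x hx).continuousAt.continuousWithinAt)
      (fun x hx ↦ (hg x (interior_subset hx)).hasDerivWithinAt) (fun x hx ↦ ?_)
      (left_mem_Icc.2 haz) (right_mem_Icc.2 haz) haz
    rw [interior_Icc] at hx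
    exact nonneg_of_mul_nonneg_left (hg' x (Ioo_subset_Icc_self hx)) (sub_pos.2 hx.1)
  · rw [uIcc_of_ge hza] at hg hg'
    refine antitoneOn_of_hasDerivWithinAt_nonpos (convex_Icc z a)
      (fun x hx ↦ (hg x hx).continuousAt.continuousWithinAt)
      (fun x hx ↦ (hg x (interior_subset hx)).hasDerivWithinAt) (fun x hx ↦ ?_)
      (left_mem_Icc.2 hza) (right_mem_Icc.2 hza) hza
    rw [interior_Icc] at hx
    exact nonpos_of_mul_nonneg_left (hg' x (Ioo_subset_Icc_self hx)) (sub_neg.2 hx.2)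

theorem sub_one_mul_max_one_rpow_mul_sq_le {p w : ℝ} (hp1 : 1 ≤ p) (hp2 : p ≤ 2) (hw : 0 ≤ w) :
    (p - 1) * max w 1 ^ (p - 2) * (w - 1) ^ 2 ≤ (w ^ (p - 1) - 1) * (w - 1) := by
  rcases eq_or_ne w 1 with rfl | hw1
  · simp
  have hconc : ConcaveOn ℝ (Ici 0) fun x : ℝ ↦ x ^ (p - 1) :=
    concaveOn_rpow (by linarith) (by linarith)
  have hderiv : ∀ y : ℝ, 0 < y → HasDerivAt (fun x : ℝ ↦ x ^ (p - 1)) ((p - 1) * y ^ (p - 2)) y :=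
    fun y hy ↦ by
      simpa [show p - 1 - 1 = p - 2 by ring] using
        hasDerivAt_rpow_const (p := p - 1) (Or.inl hy.ne')
  have hslope : (p - 1) * max w 1 ^ (p - 2) ≤ slope (fun x : ℝ ↦ x ^ (p - 1)) w 1 := by
    rcases hw1.lt_or_gt with h | h
    · rw [max_eq_right h.le]
      exact hconc.le_slope_of_hasDerivAt (mem_Ici.2 hw) (mem_Ici.2 zero_le_one) h (hderiv 1 one_pos)
    · rw [max_eq_left h.le, slope_comm]
      exact hconc.le_slope_of_hasDerivAt (mem_Ici.2 zero_le_one) (mem_Ici.2 hw) h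
        (hderiv w (by linarith))
  have hw1' : w - 1 ≠ 0 := sub_ne_zero.2 hw1
  calc (p - 1) * max w 1 ^ (p - 2) * (w - 1) ^ 2
      ≤ slope (fun x : ℝ ↦ x ^ (p - 1)) w 1 * (w - 1) ^ 2 :=
        mul_le_mul_of_nonneg_right hslope (sq_nonneg _)
    _ = (w ^ (p - 1) - 1) * (w - 1) := by
        rw [slope_def_field, one_rpow]
        field_simp
        ring

theorem mul_sq_mul_add_one_rpow_le {p z : ℝ} (hp1 : 1 ≤ p) (hp2 : p ≤ 2) (hz : 0 ≤ z) :
    p * (p - 1) / 2 * (z - 1) ^ 2 * (z + 1) ^ (p - 2) ≤ z ^ p - 1 - p * (z - 1) := by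
  have key := mul_sq_le_sub_sub_mul_of_hasDerivAt (f := fun x : ℝ ↦ x ^ p)
    (f' := fun x ↦ p * x ^ (p - 1)) (a := 1) (z := z) (m := p * (p - 1) * max z 1 ^ (p - 2))
    (fun x _ ↦ hasDerivAt_rpow_const (Or.inr hp1)) fun x hx ↦ by
      obtain ⟨hx0, hxz⟩ : 0 ≤ x ∧ max x 1 ≤ max z 1 := by
        rcases mem_uIcc.1 hx with ⟨h1, h2⟩ | ⟨h1, h2⟩
        · exact ⟨by linarith, max_le_max_right 1 h2⟩
        · exact ⟨h1.trans' hz, max_le (le_max_of_le_right h2) (le_max_right _ _)⟩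
      have hmax : max z 1 ^ (p - 2) ≤ max x 1 ^ (p - 2) :=
        rpow_le_rpow_of_nonpos (by positivity) hxz (by linarith)
      have hslope := sub_one_mul_max_one_rpow_mul_sq_le hp1 hp2 hx0
      rw [one_rpow]
      calc p * (p - 1) * max z 1 ^ (p - 2) * (x - 1) ^ 2
          ≤ p * ((p - 1) * max x 1 ^ (p - 2) * (x - 1) ^ 2) := by
            rw [← mul_assoc, ← mul_assoc]; gcongr
        _ ≤ p * ((x ^ (p - 1) - 1) * (x - 1)) := by gcongr
        _ = (p * x ^ (p - 1) - p * 1) * (x - 1) := by ring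
  simp only [one_rpow, mul_one] at key
  have hM : (z + 1) ^ (p - 2) ≤ max z 1 ^ (p - 2) :=
    rpow_le_rpow_of_nonpos (by positivity) (max_le (by linarith) (by linarith)) (by linarith)
  calc p * (p - 1) / 2 * (z - 1) ^ 2 * (z + 1) ^ (p - 2)
      ≤ p * (p - 1) / 2 * (z - 1) ^ 2 * max z 1 ^ (p - 2) := by
        gcongr
    _ = p * (p - 1) * max z 1 ^ (p - 2) / 2 * (z - 1) ^ 2 := by ring
    _ ≤ z ^ p - 1 - p * (z - 1) := key

theorem tangent_add_mul_sq_mul_rpow_le_rpow {p x t : ℝ} (hp1 : 1 ≤ p) (hp2 : p ≤ 2)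
    (hx : 0 ≤ x) (ht : 0 ≤ t) :
    t ^ p + p * t ^ (p - 2) * (t * (x - t)) + (p - 1) / 2 * (x - t) ^ 2 * (x + t) ^ (p - 2)
      ≤ x ^ p := by
  have hsq : ∀ y : ℝ, 0 ≤ y → y ^ p = y ^ (p - 2) * y ^ 2 := fun y hy ↦ by
    rw [← rpow_natCast, ← rpow_add' hy (by norm_num; linarith)]
    norm_num
  rcases ht.eq_or_lt with rfl | ht
  · have h0 : (0 : ℝ) ^ p = 0 := zero_rpow (by linarith)
    simp only [h0, mul_zero, zero_mul, sub_zero, add_zero, zero_add, hsq x hx]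
    nlinarith [mul_nonneg (rpow_nonneg hx (p - 2)) (sq_nonneg x)]
  obtain ⟨z, hz, rfl⟩ : ∃ z, 0 ≤ z ∧ x = z * t := ⟨x / t, by positivity, by field_simp⟩
  have hscalar := mul_sq_mul_add_one_rpow_le hp1 hp2 hz
  have hweak : (p - 1) / 2 * (z - 1) ^ 2 * (z + 1) ^ (p - 2)
      ≤ p * (p - 1) / 2 * (z - 1) ^ 2 * (z + 1) ^ (p - 2) := by
    gcongr
    nlinarith
  have hpow : (z * t + t) ^ (p - 2) = (z + 1) ^ (p - 2) * t ^ (p - 2) := by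
    rw [← mul_rpow (by positivity) ht.le]; ring_nf
  calc _ = t ^ (p - 2) * t ^ 2
        * (1 + p * (z - 1) + (p - 1) / 2 * (z - 1) ^ 2 * (z + 1) ^ (p - 2)) := by
        rw [hsq t ht.le, hpow]; ring
    _ ≤ t ^ (p - 2) * t ^ 2 * z ^ p := by gcongr; linarith
    _ = (z * t) ^ p := by rw [mul_rpow hz ht.le, hsq t ht.le]; ring

open scoped RealInnerProductSpace

theorem elementary_ineq_p_lt_two (p : ℝ) (hp1 : 1 < p) (hp2 : p < 2) :
    ∃ C : ℝ, 0 < C ∧ ∀ (N : ℕ) (a b : EuclideanSpace ℝ (Fin N)),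
      (a, b) ≠ (0, 0) →
      ‖a‖ ^ p ≥ ‖b‖ ^ p + p * ‖b‖ ^ (p - 2) * ⟪b, a - b⟫ +
        C * ‖a - b‖ ^ 2 / (‖a‖ + ‖b‖) ^ (2 - p) := by
  refine ⟨(p - 1) / 2, by linarith, fun N a b _ ↦ ?_⟩
  have hsum : 0 ≤ ‖a‖ + ‖b‖ := by positivity
  have hpow : (‖a‖ + ‖b‖) ^ (2 - p) = ((‖a‖ + ‖b‖) ^ (p - 2))⁻¹ := by
    rw [← rpow_neg hsum, neg_sub]
  have hsq : ‖a - b‖ ^ 2 = ‖a‖ ^ 2 - 2 * ⟪b, a⟫ + ‖b‖ ^ 2 := by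
    rw [norm_sub_sq_real, real_inner_comm]
  have hinner : ⟪b, a - b⟫ = ⟪b, a⟫ - ‖b‖ ^ 2 := by
    rw [inner_sub_right, real_inner_self_eq_norm_sq]
  have hmono : (p * ‖b‖ ^ (p - 2) - (p - 1) * (‖a‖ + ‖b‖) ^ (p - 2)) * ⟪b, a⟫
      ≤ (p * ‖b‖ ^ (p - 2) - (p - 1) * (‖a‖ + ‖b‖) ^ (p - 2)) * (‖a‖ * ‖b‖) := by
    rcases eq_or_ne b 0 with rfl | hb
    · simp
    refine mul_le_mul_of_nonneg_left (by simpa [mul_comm] using real_inner_le_norm b a) ?_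
    have : (‖a‖ + ‖b‖) ^ (p - 2) ≤ ‖b‖ ^ (p - 2) :=
      rpow_le_rpow_of_nonpos (norm_pos_iff.2 hb) (by simp) (by linarith)
    nlinarith [rpow_nonneg hsum (p - 2)]
  have hcollinear := tangent_add_mul_sq_mul_rpow_le_rpow hp1.le hp2.le
    (norm_nonneg a) (norm_nonneg b)
  rw [ge_iff_le, hinner, hsq, div_eq_mul_inv, hpow, inv_inv]
  linear_combination hcollinear + hmono
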